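/- Let C ⊆ L ∩ M be valued fields inside a common valued field. Assume Γ_L ∩ Γ_M = Γ_C, the residue fields k_L and k_M are linearly disjoint over k_C, and L has the good separated basis property over C. Then L and M are linearly disjoint over C. -/

import Mathlib

open scoped BigOperators

namespace ResidueFieldDomination

variable {K : Type*} [Field K] {Γ : Type*} [LinearOrderedAddCommGroupWithTop Γ]

/-- The value group of a valued subfield `F` of `K`, as a subset of `Γ`. -/
def valGroup (v : AddValuation K Γ) (F : Subfield K) : Set Γ :=
  {g | ∃ x ∈ F, x ≠ 0 ∧ v x = g}

/-- `ℓ₁, …, ℓ_k` is a separated tuple over `C`: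
`v(∑ cᵢ ℓᵢ) = min v(cᵢ ℓᵢ)` for all `cᵢ ∈ C`. -/
def SepOver (v : AddValuation K Γ) (C : Subfield K) {k : ℕ} (ℓ : Fin k → K) : Prop :=
  ∀ c : Fin k → K, (∀ i, c i ∈ C) →
    v (∑ i, c i * ℓ i) = Finset.univ.inf fun i => v (c i * ℓ i)

/-- The tuple is good over `C`: any two of its values are equal or differ by
an element outside the value group of `C`. -/
def GoodOver (v : AddValuation K Γ) (C : Subfield K) {k : ℕ} (ℓ : Fin k → K) : Prop :=
  ∀ i j, v (ℓ i) = v (ℓ j) ∨ v (ℓ i) - v (ℓ j) ∉ valGroup v C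

/-- The `C`-linear span of a tuple, as a set. -/
def spanIn (C : Subfield K) {n : ℕ} (a : Fin n → K) : Set K :=
  {x | ∃ c : Fin n → K, (∀ i, c i ∈ C) ∧ x = ∑ i, c i * a i}

/-- `L` has the good separated basis property over `C`: every finite-dimensional
`C`-subspace of `L` has a good separated basis. -/
def GoodSepBasisProp (v : AddValuation K Γ) (C L : Subfield K) : Prop :=
  ∀ (n : ℕ) (a : Fin n → K), (∀ i, a i ∈ L) →
    ∃ (k : ℕ) (ℓ : Fin k → K), (∀ i, ℓ i ∈ L ∧ ℓ i ≠ 0) ∧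
      spanIn C ℓ = spanIn C a ∧ SepOver v C ℓ ∧ GoodOver v C ℓ

/-- The residues of the tuple `a` (of elements of the valuation ring) are linearly
independent over the residue field of `F`. -/
def ResIndepOver (v : AddValuation K Γ) (F : Subfield K) {n : ℕ} (a : Fin n → K) : Prop :=
  ∀ c : Fin n → K, (∀ i, c i ∈ F ∧ 0 ≤ v (c i)) →
    0 < v (∑ i, c i * a i) → ∀ i, 0 < v (c i)

/-- The residue fields of `L` and `M` are linearly disjoint over the residue field of `C`:
any tuple of integers of `L` whose residues are linearly independent over `k_C`
stays residue-independent over `k_M`. -/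
def ResLinDisjoint (v : AddValuation K Γ) (C L M : Subfield K) : Prop :=
  ∀ (n : ℕ) (a : Fin n → K), (∀ i, a i ∈ L ∧ 0 ≤ v (a i)) →
    ResIndepOver v C a → ResIndepOver v M a

/-- A tuple is linearly independent over the subset `S` of `K`. -/
def LinIndepOver (S : Set K) {n : ℕ} (a : Fin n → K) : Prop :=
  ∀ c : Fin n → K, (∀ i, c i ∈ S) → ∑ i, c i * a i = 0 → ∀ i, c i = 0

open LinearOrderedAddCommGroupWithTop

lemma neg_add_cancel_of_ne_top' {a : Γ} (h : a ≠ ⊤) : -a + a = 0 := by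
  rw [add_comm]; exact add_neg_cancel_of_ne_top h

lemma add_right_cancel_of_ne_top' {a b c : Γ} (hc : c ≠ ⊤) (h : a + c = b + c) : a = b := by
  have h1 : a + (c + -c) = b + (c + -c) := by rw [← add_assoc, ← add_assoc, h]
  rwa [add_neg_cancel_of_ne_top hc, add_zero, add_zero] at h1

lemma add_lt_add_right_of_ne_top' {a b c : Γ} (hc : c ≠ ⊤) (h : a < b) : a + c < b + c :=
  lt_of_le_of_ne (add_le_add_left h.le c) fun he => h.ne (add_right_cancel_of_ne_top' hc he)

lemma lt_of_add_lt_add_right' {a b c : Γ} (h : a + c < b + c) : a < b := by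
  by_contra hba
  push_neg at hba
  exact absurd (add_le_add_left hba c) (not_le_of_gt h)

lemma sub_eq_sub_of_add_eq_add' {p q r s : Γ} (hp : p ≠ ⊤) (hs : s ≠ ⊤)
    (h : p + q = r + s) : q - s = r - p := by
  have hsp : s + p ≠ ⊤ := by simp [hs, hp]
  apply add_right_cancel_of_ne_top' hsp
  have l1 : q - s + (s + p) = q + p := by
    rw [sub_eq_add_neg, add_assoc, ← add_assoc (-s), neg_add_cancel_of_ne_top' hs, zero_add]
  have l2 : r - p + (s + p) = r + s := by
    rw [sub_eq_add_neg, add_comm s p, add_assoc, ← add_assoc (-p),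
      neg_add_cancel_of_ne_top' hp, zero_add]
  rw [l1, l2, add_comm q p, h]

lemma sepOver_M (v : AddValuation K Γ) (C L M : Subfield K)
    (hΓ : valGroup v L ∩ valGroup v M = valGroup v C)
    (hres : ResLinDisjoint v C L M)
    {k : ℕ} (ℓ : Fin k → K) (hℓ : ∀ i, ℓ i ∈ L ∧ ℓ i ≠ 0)
    (hsep : SepOver v C ℓ) (hgood : GoodOver v C ℓ) : SepOver v M ℓ := by
  intro d hd
  by_cases hall : ∀ j, d j = 0
  · have h0 : ∀ j : Fin k, d j * ℓ j = 0 := fun j => by rw [hall j, zero_mul]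
    have hs0 : ∑ j, d j * ℓ j = 0 := Finset.sum_eq_zero fun j _ => h0 j
    rw [hs0, v.map_zero]
    refine (le_antisymm le_top (Finset.le_inf fun j _ => ?_)).symm
    rw [h0 j, v.map_zero]
  push_neg at hall
  obtain ⟨j₁, hj₁⟩ := hall
  set γ := Finset.univ.inf fun j => v (d j * ℓ j) with hγdef
  have hne : (Finset.univ : Finset (Fin k)).Nonempty := ⟨j₁, Finset.mem_univ j₁⟩
  have hγtop : γ ≠ ⊤ := by
    have hle : γ ≤ v (d j₁ * ℓ j₁) := by
      rw [hγdef]; exact Finset.inf_le (Finset.mem_univ j₁)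
    intro h
    rw [h] at hle
    exact v.ne_top_iff.mpr (mul_ne_zero hj₁ (hℓ j₁).2) (top_le_iff.mp hle)
  obtain ⟨j₀, -, hj₀⟩ := Finset.exists_mem_eq_inf Finset.univ hne fun j => v (d j * ℓ j)
  rw [← hγdef] at hj₀
  set J : Finset (Fin k) := Finset.univ.filter (fun j => v (d j * ℓ j) = γ) with hJdef
  have hj₀J : j₀ ∈ J := Finset.mem_filter.mpr ⟨Finset.mem_univ _, hj₀.symm⟩
  have hdJ : ∀ j ∈ J, d j ≠ 0 := by
    intro j hj h0
    have hvj : v (d j * ℓ j) = γ := (Finset.mem_filter.mp hj).2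
    rw [h0, zero_mul, v.map_zero] at hvj
    exact hγtop hvj.symm
  have hdj₀ : d j₀ ≠ 0 := hdJ j₀ hj₀J
  have hvdj₀ : v (d j₀) ≠ ⊤ := v.ne_top_iff.mpr hdj₀
  have hvℓ : ∀ j, v (ℓ j) ≠ ⊤ := fun j => v.ne_top_iff.mpr (hℓ j).2
  have claim1 : ∀ j ∈ J, v (ℓ j) = v (ℓ j₀) := by
    intro j hj
    have heq : v (d j) + v (ℓ j) = v (d j₀) + v (ℓ j₀) := by
      rw [← v.map_mul, ← v.map_mul, (Finset.mem_filter.mp hj).2, hj₀]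
    have hvdj : v (d j) ≠ ⊤ := v.ne_top_iff.mpr (hdJ j hj)
    rcases hgood j j₀ with h | h
    · exact h
    exfalso
    apply h
    rw [← hΓ]
    constructor
    · exact ⟨ℓ j / ℓ j₀, Subfield.div_mem L (hℓ j).1 (hℓ j₀).1,
        div_ne_zero (hℓ j).2 (hℓ j₀).2, v.map_div⟩
    · refine ⟨d j₀ / d j, Subfield.div_mem M (hd j₀) (hd j), div_ne_zero hdj₀ (hdJ j hj), ?_⟩
      rw [v.map_div]
      exact (sub_eq_sub_of_add_eq_add' hvdj (hvℓ j₀) heq).symm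
  have claimd : ∀ j ∈ J, v (d j) = v (d j₀) := by
    intro j hj
    have heq : v (d j) + v (ℓ j) = v (d j₀) + v (ℓ j₀) := by
      rw [← v.map_mul, ← v.map_mul, (Finset.mem_filter.mp hj).2, hj₀]
    rw [claim1 j hj] at heq
    exact add_right_cancel_of_ne_top' (hvℓ j₀) heq
  -- reindex J by Fin N
  set N := J.card with hN
  set e : Fin N → Fin k := fun t => ((J.equivFin.symm t) : Fin k) with he
  have heJ : ∀ t, e t ∈ J := fun t => (J.equivFin.symm t).2
  have hsumJ : ∀ g : Fin k → K, ∑ j ∈ J, g j = ∑ t, g (e t) := by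
    intro g
    calc ∑ j ∈ J, g j = ∑ i : J, g i := (Finset.sum_coe_sort J g).symm
      _ = ∑ t, g (e t) :=
        (Fintype.sum_equiv J.equivFin.symm (fun t => g (e t)) (fun i => g i)
          (fun t => rfl)).symm
  set b : Fin N → K := fun t => ℓ (e t) / ℓ j₀ with hb
  have hvb : ∀ t, v (b t) = 0 := by
    intro t
    simp only [hb]
    rw [v.map_div, claim1 _ (heJ t), sub_eq_add_neg, add_neg_cancel_of_ne_top (hvℓ j₀)]
  have hbL : ∀ t, b t ∈ L ∧ 0 ≤ v (b t) := fun t =>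
    ⟨Subfield.div_mem L (hℓ (e t)).1 (hℓ j₀).1, le_of_eq (hvb t).symm⟩
  have hresC : ResIndepOver v C b := by
    intro c hc hpos t
    set c' : Fin k → K := fun j => if h : j ∈ J then c (J.equivFin ⟨j, h⟩) else 0 with hc'
    have hc'e : ∀ s, c' (e s) = c s := by
      intro s
      have h1 : e s ∈ J := heJ s
      simp only [hc']
      rw [dif_pos h1]
      congr 1
      have h2 : (⟨e s, h1⟩ : J) = J.equivFin.symm s := Subtype.ext rfl
      rw [h2, Equiv.apply_symm_apply]
    have hc'C : ∀ j, c' j ∈ C := by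
      intro j; simp only [hc']; split
      · exact (hc _).1
      · exact zero_mem C
    have hkey : ∑ j, c' j * ℓ j = (∑ s, c s * b s) * ℓ j₀ := by
      rw [Finset.sum_mul]
      calc ∑ j, c' j * ℓ j
          = ∑ j ∈ J, c' j * ℓ j := (Finset.sum_subset (Finset.subset_univ J)
            (fun j _ hj => by simp only [hc']; rw [dif_neg hj, zero_mul])).symm
        _ = ∑ s, c' (e s) * ℓ (e s) := hsumJ _
        _ = ∑ s, c s * b s * ℓ j₀ := Finset.sum_congr rfl fun s _ => by
            rw [hc'e s]
            simp only [hb]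
            rw [mul_assoc, div_mul_cancel₀ _ (hℓ j₀).2]
    have hvsum : v ((∑ s, c s * b s) * ℓ j₀) = Finset.univ.inf fun j => v (c' j * ℓ j) := by
      rw [← hkey]; exact hsep c' hc'C
    have hgt : v (ℓ j₀) < Finset.univ.inf fun j => v (c' j * ℓ j) := by
      rw [← hvsum, v.map_mul]
      calc v (ℓ j₀) = 0 + v (ℓ j₀) := (zero_add _).symm
        _ < v (∑ s, c s * b s) + v (ℓ j₀) := add_lt_add_right_of_ne_top' (hvℓ j₀) hpos
    have ht : v (ℓ j₀) < v (c' (e t) * ℓ (e t)) :=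
      lt_of_lt_of_le hgt (Finset.inf_le (Finset.mem_univ _))
    rw [hc'e t, v.map_mul, claim1 _ (heJ t)] at ht
    refine lt_of_add_lt_add_right' (c := v (ℓ j₀)) ?_
    rwa [zero_add]
  have hresM : ResIndepOver v M b := hres N b hbL hresC
  set m : Fin N → K := fun t => d (e t) / d j₀ with hm
  have hvm : ∀ t, v (m t) = 0 := by
    intro t
    simp only [hm]
    rw [v.map_div, claimd _ (heJ t), sub_eq_add_neg, add_neg_cancel_of_ne_top hvdj₀]
  set t₀ : Fin N := J.equivFin ⟨j₀, hj₀J⟩ with ht₀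
  have het₀ : e t₀ = j₀ := by
    simp only [he, ht₀, Equiv.symm_apply_apply]
  have hmt₀ : m t₀ = 1 := by simp only [hm]; rw [het₀, div_self hdj₀]
  have hσ0 : v (∑ t, m t * b t) = 0 := by
    have hge : (0:Γ) ≤ v (∑ t, m t * b t) :=
      v.map_le_sum fun t _ => by rw [v.map_mul, hvm t, hvb t, add_zero]
    rcases lt_or_eq_of_le hge with hlt | heq
    · exfalso
      have hc := hresM m
        (fun t => ⟨Subfield.div_mem M (hd (e t)) (hd j₀), le_of_eq (hvm t).symm⟩) hlt t₀
      rw [hmt₀, v.map_one] at hc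
      exact lt_irrefl _ hc
    · exact heq.symm
  have hS : v (∑ j ∈ J, d j * ℓ j) = γ := by
    have hSeq : ∑ j ∈ J, d j * ℓ j = (∑ t, m t * b t) * (d j₀ * ℓ j₀) := by
      rw [Finset.sum_mul, hsumJ fun j => d j * ℓ j]
      refine Finset.sum_congr rfl fun t _ => ?_
      simp only [hm, hb]
      rw [div_mul_div_comm, div_mul_cancel₀ _ (mul_ne_zero hdj₀ (hℓ j₀).2)]
    rw [hSeq, v.map_mul, hσ0, zero_add, hj₀]
  have hsplit : ∑ j, d j * ℓ j =
      (∑ j ∈ J, d j * ℓ j) +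
        ∑ j ∈ Finset.univ.filter (fun j => ¬ v (d j * ℓ j) = γ), d j * ℓ j := by
    rw [hJdef]
    exact (Finset.sum_filter_add_sum_filter_not _ _ _).symm
  have hT : γ < v (∑ j ∈ Finset.univ.filter (fun j => ¬ v (d j * ℓ j) = γ), d j * ℓ j) := by
    refine v.map_lt_sum' (lt_top_iff_ne_top.mpr hγtop) fun j hj => ?_
    have h1 : γ ≤ v (d j * ℓ j) := by
      rw [hγdef]; exact Finset.inf_le (Finset.mem_univ j)
    exact lt_of_le_of_ne h1 (Ne.symm (Finset.mem_filter.mp hj).2)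
  rw [hsplit, v.map_add_eq_of_lt_left (by rw [hS]; exact hT), hS]

lemma linIndepOver_of_sepOver (v : AddValuation K Γ) (F : Subfield K) {k : ℕ}
    (ℓ : Fin k → K) (hℓ0 : ∀ i, ℓ i ≠ 0) (hsep : SepOver v F ℓ) :
    LinIndepOver (F : Set K) ℓ := by
  intro c hc hsum i
  have h := hsep c hc
  rw [hsum, v.map_zero] at h
  have h1 : (⊤:Γ) ≤ v (c i * ℓ i) := h ▸ Finset.inf_le (Finset.mem_univ i)
  have h2 : c i * ℓ i = 0 := v.top_iff.mp (top_le_iff.mp h1)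
  exact (mul_eq_zero.mp h2).resolve_right (hℓ0 i)


/-- if `Γ_L ∩ Γ_M = Γ_C`, the residue fields are linearly disjoint over `k_C`,
and `L` has the good separated basis property over `C`, then `L` and `M` are
linearly disjoint over `C`. -/
theorem linearly_disjoint_of_good_separated_basis
    (v : AddValuation K Γ) (C L M : Subfield K) (hCL : C ≤ L) (hCM : C ≤ M)
    (hΓ : valGroup v L ∩ valGroup v M = valGroup v C)
    (hres : ResLinDisjoint v C L M)
    (hgsb : GoodSepBasisProp v C L) :
    ∀ (n : ℕ) (a : Fin n → K), (∀ i, a i ∈ L) →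
      LinIndepOver (C : Set K) a → LinIndepOver (M : Set K) a := by
  intro n a haL hCind
  obtain ⟨k, ℓ, hℓ, hspan, hsep, hgood⟩ := hgsb n a haL
  have haspan : ∀ i, a i ∈ spanIn C ℓ := by
    intro i
    rw [hspan]
    refine ⟨fun j => if j = i then 1 else 0,
      fun j => by dsimp only; split
                  exacts [one_mem C, zero_mem C], ?_⟩
    simp [ite_mul]
  have hℓspan : ∀ j, ℓ j ∈ spanIn C a := by
    intro j
    rw [← hspan]
    refine ⟨fun j' => if j' = j then 1 else 0,
      fun j' => by dsimp only; split
                   exacts [one_mem C, zero_mem C], ?_⟩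
    simp [ite_mul]
  choose cc hccC hcca using haspan
  choose dd hddC hddℓ using hℓspan
  have hcd : ∀ i t, ∑ j, cc i j * dd j t = if t = i then 1 else 0 := by
    intro i t
    have hE : ∀ s : Fin n,
        ((∑ j, cc i j * dd j s) - (if s = i then 1 else 0)) ∈ (C : Set K) := by
      intro s
      refine sub_mem (Subfield.sum_mem C fun j _ => mul_mem (hccC i j) (hddC j s)) ?_
      split
      exacts [one_mem C, zero_mem C]
    have h1 : ∑ s, (∑ j, cc i j * dd j s) * a s = a i := by
      calc ∑ s, (∑ j, cc i j * dd j s) * a s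
          = ∑ s, ∑ j, cc i j * (dd j s * a s) := Finset.sum_congr rfl fun s _ => by
            rw [Finset.sum_mul]
            exact Finset.sum_congr rfl fun j _ => by ring
        _ = ∑ j, ∑ s, cc i j * (dd j s * a s) := Finset.sum_comm
        _ = ∑ j, cc i j * ∑ s, dd j s * a s := Finset.sum_congr rfl fun j _ =>
            (Finset.mul_sum _ _ _).symm
        _ = ∑ j, cc i j * ℓ j := Finset.sum_congr rfl fun j _ => by rw [← hddℓ j]
        _ = a i := (hcca i).symm
    have hsum0 : ∑ s, ((∑ j, cc i j * dd j s) - if s = i then 1 else 0) * a s = 0 := by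
      have h3 : ∑ s, (if s = i then (1:K) else 0) * a s = a i := by simp [ite_mul]
      calc ∑ s, ((∑ j, cc i j * dd j s) - if s = i then 1 else 0) * a s
          = ∑ s, ((∑ j, cc i j * dd j s) * a s - (if s = i then 1 else 0) * a s) :=
            Finset.sum_congr rfl fun s _ => sub_mul _ _ _
        _ = (∑ s, (∑ j, cc i j * dd j s) * a s) - ∑ s, (if s = i then (1:K) else 0) * a s :=
            Finset.sum_sub_distrib _ _
        _ = 0 := by rw [h1, h3, sub_self]
    exact sub_eq_zero.mp (hCind _ hE hsum0 t)
  intro mc hmcM hmsum i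
  have hℓind : LinIndepOver (M : Set K) ℓ :=
    linIndepOver_of_sepOver v M ℓ (fun j => (hℓ j).2)
      (sepOver_M v C L M hΓ hres ℓ hℓ hsep hgood)
  have hg0 : ∀ j, ∑ i', mc i' * cc i' j = 0 := by
    have hsum2 : ∑ j, (∑ i', mc i' * cc i' j) * ℓ j = 0 := by
      calc ∑ j, (∑ i', mc i' * cc i' j) * ℓ j
          = ∑ j, ∑ i', mc i' * (cc i' j * ℓ j) := Finset.sum_congr rfl fun j _ => by
            rw [Finset.sum_mul]
            exact Finset.sum_congr rfl fun i' _ => by ring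
        _ = ∑ i', ∑ j, mc i' * (cc i' j * ℓ j) := Finset.sum_comm
        _ = ∑ i', mc i' * ∑ j, cc i' j * ℓ j := Finset.sum_congr rfl fun i' _ =>
            (Finset.mul_sum _ _ _).symm
        _ = ∑ i', mc i' * a i' := Finset.sum_congr rfl fun i' _ => by rw [← hcca i']
        _ = 0 := hmsum
    exact hℓind _ (fun j => Subfield.sum_mem M fun i' _ =>
      mul_mem (hmcM i') (hCM (hccC i' j))) hsum2
  calc mc i = ∑ t, mc t * (if i = t then 1 else 0) := by simp
    _ = ∑ t, mc t * ∑ j, cc t j * dd j i := Finset.sum_congr rfl fun t _ => by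
        rw [hcd t i]
    _ = ∑ t, ∑ j, mc t * (cc t j * dd j i) := Finset.sum_congr rfl fun t _ =>
        Finset.mul_sum _ _ _
    _ = ∑ j, ∑ t, mc t * (cc t j * dd j i) := Finset.sum_comm
    _ = ∑ j, (∑ t, mc t * cc t j) * dd j i := Finset.sum_congr rfl fun j _ => by
        rw [Finset.sum_mul]
        exact Finset.sum_congr rfl fun t _ => (mul_assoc _ _ _).symm
    _ = 0 := by simp [hg0]

end ResidueFieldDomination
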